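/- Let G and H be graphs on disjoint vertex sets, G₀ and H₀ induced subgraphs of G and H with α(G₀) = α(G)−1 and α(H₀) = α(H)−1, and J = j(G,G₀,H,H₀). Then each of the following vertex subsets S of V(J) induces a maximal induced subgraph of J with stability number α(J)−1: (i) S = A ∪ B, where A ⊆ V(G) induces a maximal induced subgraph of G with stability number α(G)−1, B ⊆ V(H) induces a maximal induced subgraph of H with stability number α(H)−1, and α(G[A ∩ V(G₀)]) = α(G)−1 and α(H[B ∩ V(H₀)]) = α(H)−1; (ii) S = A ∪ V(H), where A ⊆ V(G) induces a maximal induced subgraph of G with stability number α(G)−1 and α(G[A ∩ V(G₀)]) = α(G)−2; (iii) S = V(G) ∪ B, where B ⊆ V(H) induces a maximal induced subgraph of H with stability number α(H)−1 and α(H[B ∩ V(H₀)]) = α(H)−2. -/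
import Mathlib


open SimpleGraph

/-- The stability (independence) number of the subgraph of `G` induced on the
vertex set `S`: the maximum cardinality of a stable (independent) subset of `S`. -/
noncomputable def alphaOn {V : Type*} [Fintype V] (G : SimpleGraph V) (S : Set V) : ℕ :=
  sSup {n | ∃ s : Finset V, ↑s ⊆ S ∧ (∀ u ∈ s, ∀ v ∈ s, ¬ G.Adj u v) ∧ s.card = n}

/-- The stability (independence) number `α(G)` of `G`. -/
noncomputable def alphaNum {V : Type*} [Fintype V] (G : SimpleGraph V) : ℕ :=
  alphaOn G Set.univ

/-- The edge `{u, v}` of `G` is an α-critical edge: deleting it increases the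
stability number by one. -/
def IsCriticalEdge {V : Type*} [Fintype V] (G : SimpleGraph V) (u v : V) : Prop :=
  G.Adj u v ∧ alphaNum (G.deleteEdges {s(u, v)}) = alphaNum G + 1

/-- `G` is an α-critical graph: every edge is α-critical. -/
def IsAlphaCritical {V : Type*} [Fintype V] (G : SimpleGraph V) : Prop :=
  ∀ u v, G.Adj u v → alphaNum (G.deleteEdges {s(u, v)}) = alphaNum G + 1

/-- `S` induces a maximal induced subgraph of `G` with stability number `α(G) - 1`:
`α(G[S]) = α(G) - 1` and adding any further vertex raises the stability number to `α(G)`. -/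
def IsMaxAlphaSub {V : Type*} [Fintype V] (G : SimpleGraph V) (S : Set V) : Prop :=
  alphaOn G S + 1 = alphaNum G ∧ ∀ w ∉ S, alphaOn G (insert w S) = alphaNum G

/-- The 1-join `j(G, G₀, H, H₀)` of `G` and `H`, where `A = V(G₀)` and `B = V(H₀)`:
the disjoint union of `G` and `H` together with all edges between `V(G) ∖ A` and
`V(H) ∖ B`. -/
def oneJoin {α β : Type*} (G : SimpleGraph α) (H : SimpleGraph β)
    (A : Set α) (B : Set β) : SimpleGraph (α ⊕ β) :=
  SimpleGraph.fromRel (fun x y =>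
    (∃ a b, x = Sum.inl a ∧ y = Sum.inl b ∧ G.Adj a b) ∨
    (∃ a b, x = Sum.inr a ∧ y = Sum.inr b ∧ H.Adj a b) ∨
    (∃ a b, x = Sum.inl a ∧ y = Sum.inr b ∧ a ∉ A ∧ b ∉ B))

/-- The edge-vertex composition `c(G, e, H, v)` with `e = {v₁, v₂}` and
`N_H(v) = U₁ ⊔ U₂`: vertex set `V(G) ⊔ (V(H) ∖ {v})`, edge set
`(E(G) ∖ {e}) ∪ E(H - v) ∪ {v₁u : u ∈ U₁} ∪ {v₂u : u ∈ U₂}`. -/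
def evComp {α β : Type*} (G : SimpleGraph α) (v₁ v₂ : α) (H : SimpleGraph β) (v : β)
    (U₁ U₂ : Set β) : SimpleGraph (α ⊕ {b : β // b ≠ v}) :=
  SimpleGraph.fromRel (fun x y =>
    (∃ a b, x = Sum.inl a ∧ y = Sum.inl b ∧ G.Adj a b ∧ s(a, b) ≠ s(v₁, v₂)) ∨
    (∃ a b : {b : β // b ≠ v}, x = Sum.inr a ∧ y = Sum.inr b ∧ H.Adj a b) ∨
    (∃ b : {b : β // b ≠ v}, x = Sum.inl v₁ ∧ y = Sum.inr b ∧ (b : β) ∈ U₁) ∨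
    (∃ b : {b : β // b ≠ v}, x = Sum.inl v₂ ∧ y = Sum.inr b ∧ (b : β) ∈ U₂))

/-- The splitting `s(H, v)` of the vertex `v` of `H`, with `N_H(v) = N₁ ⊔ N₂`.
The new vertices `v′`, `v″`, `u` are represented by `Sum.inr 0`, `Sum.inr 1`,
`Sum.inr 2` respectively. -/
def splitting {β : Type*} (H : SimpleGraph β) (v : β) (N₁ N₂ : Set β) :
    SimpleGraph ({b : β // b ≠ v} ⊕ Fin 3) :=
  SimpleGraph.fromRel (fun x y =>
    (∃ a b : {b : β // b ≠ v}, x = Sum.inl a ∧ y = Sum.inl b ∧ H.Adj a b) ∨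
    (∃ a : {b : β // b ≠ v}, x = Sum.inl a ∧ y = Sum.inr 0 ∧ (a : β) ∈ N₁) ∨
    (∃ a : {b : β // b ≠ v}, x = Sum.inl a ∧ y = Sum.inr 1 ∧ (a : β) ∈ N₂) ∨
    (x = Sum.inr 0 ∧ y = Sum.inr 2) ∨ (x = Sum.inr 1 ∧ y = Sum.inr 2))

/-- The duplication `d(G, v)` of the vertex `v` of `G`: a new vertex `v′`
(represented by `Sum.inr ()`) is added, adjacent exactly to the closed
neighborhood `N_G[v]`. -/
def duplication {α : Type*} (G : SimpleGraph α) (v : α) : SimpleGraph (α ⊕ Unit) :=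
  SimpleGraph.fromRel (fun x y =>
    (∃ a b, x = Sum.inl a ∧ y = Sum.inl b ∧ G.Adj a b) ∨
    (∃ a, x = Sum.inl a ∧ y = Sum.inr () ∧ a ∈ insert v (G.neighborSet v)))

/-- A graph is duplication free iff it contains no pair of adjacent vertices
with equal closed neighborhoods. -/
def DuplicationFree {α : Type*} (G : SimpleGraph α) : Prop :=
  ∀ u v, G.Adj u v → insert u (G.neighborSet u) ≠ insert v (G.neighborSet v)

/-- `G` is 2-connected: it has at least three vertices and the deletion of any
single vertex leaves it connected. -/
def TwoConnected {V : Type*} [Fintype V] (G : SimpleGraph V) : Prop :=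
  3 ≤ Fintype.card V ∧ ∀ x : V, (G.induce {x}ᶜ).Connected


section myHelpers
open Sum
set_option linter.unusedSectionVars false

variable {V : Type*} [Fintype V] (G : SimpleGraph V)

lemma alphaOn_le_of (S : Set V) (n : ℕ)
    (h : ∀ s : Finset V, ↑s ⊆ S → (∀ u ∈ s, ∀ v ∈ s, ¬ G.Adj u v) → s.card ≤ n) :
    alphaOn G S ≤ n := by
  unfold alphaOn
  refine csSup_le ⟨0, ∅, by simp⟩ ?_
  rintro m ⟨s, hs, hind, rfl⟩; exact h s hs hind

lemma le_alphaOn (S : Set V) (s : Finset V) (hs : ↑s ⊆ S)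
    (hind : ∀ u ∈ s, ∀ v ∈ s, ¬ G.Adj u v) : s.card ≤ alphaOn G S := by
  unfold alphaOn
  refine le_csSup ⟨Fintype.card V, ?_⟩ ⟨s, hs, hind, rfl⟩
  rintro m ⟨t, _, _, rfl⟩; exact t.card_le_univ

lemma exists_alphaOn (S : Set V) : ∃ s : Finset V, ↑s ⊆ S ∧
    (∀ u ∈ s, ∀ v ∈ s, ¬ G.Adj u v) ∧ s.card = alphaOn G S := by
  exact Nat.sSup_mem (s := {n | ∃ s : Finset V, ↑s ⊆ S ∧
      (∀ u ∈ s, ∀ v ∈ s, ¬ G.Adj u v) ∧ s.card = n}) ⟨0, ∅, by simp⟩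
    ⟨Fintype.card V, by rintro m ⟨t, _, _, rfl⟩; exact t.card_le_univ⟩

lemma alphaOn_mono {S T : Set V} (h : S ⊆ T) : alphaOn G S ≤ alphaOn G T := by
  obtain ⟨s, hs, hind, hc⟩ := exists_alphaOn G S
  rw [← hc]; exact le_alphaOn G T s (hs.trans h) hind

end myHelpers

section myJoin
open Sum
set_option linter.unusedSectionVars false

variable {α β : Type*} [Fintype α] [Fintype β]
  (G : SimpleGraph α) (H : SimpleGraph β) (A₀ : Set α) (B₀ : Set β)

lemma oneJoin_adj_ll {a b : α} : (oneJoin G H A₀ B₀).Adj (inl a) (inl b) ↔ G.Adj a b := by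
  simp only [oneJoin, fromRel_adj]
  constructor
  · rintro ⟨-, h | h⟩ <;> rcases h with ⟨a', b', h1, h2, h⟩ | ⟨a', b', h1, h2, h⟩ | ⟨a', b', h1, h2, h⟩ <;>
      simp_all
    exact h.symm
  · intro h; exact ⟨by simp [h.ne], Or.inl (Or.inl ⟨a, b, rfl, rfl, h⟩)⟩

lemma oneJoin_adj_rr {a b : β} : (oneJoin G H A₀ B₀).Adj (inr a) (inr b) ↔ H.Adj a b := by
  simp only [oneJoin, fromRel_adj]
  constructor
  · rintro ⟨-, h | h⟩ <;> rcases h with ⟨a', b', h1, h2, h⟩ | ⟨a', b', h1, h2, h⟩ | ⟨a', b', h1, h2, h⟩ <;>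
      simp_all
    exact h.symm
  · intro h; exact ⟨by simp [h.ne], Or.inl (Or.inr (Or.inl ⟨a, b, rfl, rfl, h⟩))⟩

lemma oneJoin_adj_lr {a : α} {b : β} :
    (oneJoin G H A₀ B₀).Adj (inl a) (inr b) ↔ a ∉ A₀ ∧ b ∉ B₀ := by
  simp only [oneJoin, fromRel_adj]
  constructor
  · rintro ⟨-, h | h⟩ <;> rcases h with ⟨a', b', h1, h2, h⟩ | ⟨a', b', h1, h2, h⟩ | ⟨a', b', h1, h2, h⟩ <;>
      simp_all
  · rintro ⟨h1, h2⟩; exact ⟨by simp, Or.inl (Or.inr (Or.inr ⟨a, b, rfl, rfl, h1, h2⟩))⟩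

/-- Master lemma: independence number of the 1-join on a split vertex set. -/
lemma oneJoin_alphaOn (P : Set α) (Q : Set β) :
    alphaOn (oneJoin G H A₀ B₀) (inl '' P ∪ inr '' Q) =
      max (alphaOn G (P ∩ A₀) + alphaOn H Q) (alphaOn G P + alphaOn H (Q ∩ B₀)) := by
  apply le_antisymm
  · apply alphaOn_le_of
    intro s hs hind
    set s₁ := s.toLeft with hs₁
    set s₂ := s.toRight with hs₂
    have hsub₁ : ↑s₁ ⊆ P := by
      intro a ha
      rcases hs (by simpa using (Finset.mem_toLeft.mp ha)) with ⟨a', ha', h⟩ | ⟨b', hb', h⟩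
      · cases h; exact ha'
      · cases h
    have hsub₂ : ↑s₂ ⊆ Q := by
      intro b hb
      rcases hs (by simpa using (Finset.mem_toRight.mp hb)) with ⟨a', ha', h⟩ | ⟨b', hb', h⟩
      · cases h
      · cases h; exact hb'
    have hind₁ : ∀ u ∈ s₁, ∀ v ∈ s₁, ¬ G.Adj u v := by
      intro u hu v hv hadj
      exact hind _ (Finset.mem_toLeft.mp hu) _ (Finset.mem_toLeft.mp hv)
        ((oneJoin_adj_ll G H A₀ B₀).mpr hadj)
    have hind₂ : ∀ u ∈ s₂, ∀ v ∈ s₂, ¬ H.Adj u v := by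
      intro u hu v hv hadj
      exact hind _ (Finset.mem_toRight.mp hu) _ (Finset.mem_toRight.mp hv)
        ((oneJoin_adj_rr G H A₀ B₀).mpr hadj)
    rw [← Finset.card_toLeft_add_card_toRight (u := s)]
    by_cases hcase : ∀ a ∈ s₁, a ∈ A₀
    · refine le_max_of_le_left (add_le_add ?_ ?_)
      · exact le_alphaOn G _ s₁ (fun a ha => ⟨hsub₁ ha, hcase a ha⟩) hind₁
      · exact le_alphaOn H _ s₂ hsub₂ hind₂
    · push_neg at hcase
      obtain ⟨a, ha, haA⟩ := hcase
      refine le_max_of_le_right (add_le_add ?_ ?_)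
      · exact le_alphaOn G _ s₁ hsub₁ hind₁
      · refine le_alphaOn H _ s₂ (fun b hb => ⟨hsub₂ hb, ?_⟩) hind₂
        by_contra hbB
        exact hind _ (Finset.mem_toLeft.mp ha) _ (Finset.mem_toRight.mp hb)
          ((oneJoin_adj_lr G H A₀ B₀).mpr ⟨haA, hbB⟩)
  · have key : ∀ (P' : Set α) (Q' : Set β), P' ⊆ P → Q' ⊆ Q →
        (P' ⊆ A₀ ∨ Q' ⊆ B₀) →
        alphaOn G P' + alphaOn H Q' ≤ alphaOn (oneJoin G H A₀ B₀) (inl '' P ∪ inr '' Q) := by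
      intro P' Q' hP' hQ' hside
      obtain ⟨s₁, hs₁, hind₁, hc₁⟩ := exists_alphaOn G P'
      obtain ⟨s₂, hs₂, hind₂, hc₂⟩ := exists_alphaOn H Q'
      rw [← hc₁, ← hc₂, ← Finset.card_disjSum]
      apply le_alphaOn
      · intro x hx
        rcases Finset.mem_disjSum.mp (by simpa using hx) with ⟨a, ha, rfl⟩ | ⟨b, hb, rfl⟩
        · exact Or.inl ⟨a, hP' (hs₁ ha), rfl⟩
        · exact Or.inr ⟨b, hQ' (hs₂ hb), rfl⟩
      · intro u hu v hv hadj
        rcases Finset.mem_disjSum.mp hu with ⟨a, ha, rfl⟩ | ⟨b, hb, rfl⟩ <;>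
          rcases Finset.mem_disjSum.mp hv with ⟨a', ha', rfl⟩ | ⟨b', hb', rfl⟩
        · exact hind₁ a ha a' ha' ((oneJoin_adj_ll G H A₀ B₀).mp hadj)
        · obtain ⟨h1, h2⟩ := (oneJoin_adj_lr G H A₀ B₀).mp hadj
          rcases hside with h | h
          · exact h1 (h (hs₁ ha))
          · exact h2 (h (hs₂ hb'))
        · obtain ⟨h1, h2⟩ := (oneJoin_adj_lr G H A₀ B₀).mp (hadj.symm)
          rcases hside with h | h
          · exact h1 (h (hs₁ ha'))
          · exact h2 (h (hs₂ hb))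
        · exact hind₂ b hb b' hb' ((oneJoin_adj_rr G H A₀ B₀).mp hadj)
    apply max_le
    · exact key (P ∩ A₀) Q Set.inter_subset_left subset_rfl
        (Or.inl Set.inter_subset_right)
    · exact key P (Q ∩ B₀) subset_rfl Set.inter_subset_left
        (Or.inr Set.inter_subset_right)

end myJoin

/-- For the 1-join `J = j(G, G₀, H, H₀)` (with
`α(G₀) = α(G) - 1` and `α(H₀) = α(H) - 1`), each of the vertex subsets
(i)–(iii) induces a maximal induced subgraph of `J` with stability number
`α(J) - 1`. -/
theorem oneJoin_isMaxAlphaSub {α β : Type*} [Fintype α] [Fintype β]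
    (G : SimpleGraph α) (H : SimpleGraph β) (A₀ : Set α) (B₀ : Set β)
    (hA : alphaOn G A₀ + 1 = alphaNum G) (hB : alphaOn H B₀ + 1 = alphaNum H) :
    -- (i) S = A ∪ B
    (∀ (A : Set α) (B : Set β), IsMaxAlphaSub G A → IsMaxAlphaSub H B →
      alphaOn G (A ∩ A₀) + 1 = alphaNum G → alphaOn H (B ∩ B₀) + 1 = alphaNum H →
      IsMaxAlphaSub (oneJoin G H A₀ B₀) (Sum.inl '' A ∪ Sum.inr '' B)) ∧
    -- (ii) S = A ∪ V(H)
    (∀ A : Set α, IsMaxAlphaSub G A → alphaOn G (A ∩ A₀) + 2 = alphaNum G →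
      IsMaxAlphaSub (oneJoin G H A₀ B₀) (Sum.inl '' A ∪ Set.range Sum.inr)) ∧
    -- (iii) S = V(G) ∪ B
    (∀ B : Set β, IsMaxAlphaSub H B → alphaOn H (B ∩ B₀) + 2 = alphaNum H →
      IsMaxAlphaSub (oneJoin G H A₀ B₀) (Set.range Sum.inl ∪ Sum.inr '' B)) := by
  have hA' : alphaOn G A₀ + 1 = alphaOn G Set.univ := hA
  have hB' : alphaOn H B₀ + 1 = alphaOn H Set.univ := hB
  have hmaster := oneJoin_alphaOn G H A₀ B₀
  have huniv : (Set.univ : Set (α ⊕ β)) = Sum.inl '' Set.univ ∪ Sum.inr '' Set.univ := by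
    ext x; cases x <;> simp
  have hrl : Set.range (Sum.inl : α → α ⊕ β) = Sum.inl '' Set.univ := Set.image_univ.symm
  have hrr : Set.range (Sum.inr : β → α ⊕ β) = Sum.inr '' Set.univ := Set.image_univ.symm
  have hJval : alphaNum (oneJoin G H A₀ B₀) + 1 = alphaOn G Set.univ + alphaOn H Set.univ := by
    show alphaOn (oneJoin G H A₀ B₀) Set.univ + 1 = _
    rw [huniv, hmaster, Set.univ_inter, Set.univ_inter]
    omega
  refine ⟨?_, ?_, ?_⟩
  · rintro A B ⟨hA1, hA2⟩ ⟨hB1, hB2⟩ hAA hBB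
    have hA1' : alphaOn G A + 1 = alphaOn G Set.univ := hA1
    have hB1' : alphaOn H B + 1 = alphaOn H Set.univ := hB1
    have hAA' : alphaOn G (A ∩ A₀) + 1 = alphaOn G Set.univ := hAA
    have hBB' : alphaOn H (B ∩ B₀) + 1 = alphaOn H Set.univ := hBB
    constructor
    · rw [hmaster]; omega
    · rintro (a | b) hw
      · have haA : a ∉ A := fun h => hw (Or.inl ⟨a, h, rfl⟩)
        have hins : insert (Sum.inl a) (Sum.inl '' A ∪ Sum.inr '' B) =
            Sum.inl '' (insert a A) ∪ Sum.inr '' B := by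
          rw [Set.image_insert_eq, Set.insert_union]
        rw [hins, hmaster]
        have e2 : alphaOn G (insert a A) = alphaOn G Set.univ := hA2 a haA
        have u1 : alphaOn G (insert a A ∩ A₀) ≤ alphaOn G A₀ :=
          alphaOn_mono G Set.inter_subset_right
        omega
      · have hbB : b ∉ B := fun h => hw (Or.inr ⟨b, h, rfl⟩)
        have hins : insert (Sum.inr b) (Sum.inl '' A ∪ Sum.inr '' B) =
            Sum.inl '' A ∪ Sum.inr '' (insert b B) := by
          rw [Set.image_insert_eq]
          ext x; simp only [Set.mem_insert_iff, Set.mem_union]; tauto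
        rw [hins, hmaster]
        have e2 : alphaOn H (insert b B) = alphaOn H Set.univ := hB2 b hbB
        have u1 : alphaOn H (insert b B ∩ B₀) ≤ alphaOn H B₀ :=
          alphaOn_mono H Set.inter_subset_right
        omega
  · rintro A ⟨hA1, hA2⟩ hAA
    have hA1' : alphaOn G A + 1 = alphaOn G Set.univ := hA1
    have hAA' : alphaOn G (A ∩ A₀) + 2 = alphaOn G Set.univ := hAA
    constructor
    · rw [hrr, hmaster, Set.univ_inter]; omega
    · rintro (a | b) hw
      · have haA : a ∉ A := fun h => hw (Or.inl ⟨a, h, rfl⟩)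
        have hins : insert (Sum.inl a) (Sum.inl '' A ∪ Set.range (Sum.inr : β → α ⊕ β)) =
            Sum.inl '' (insert a A) ∪ Sum.inr '' Set.univ := by
          rw [hrr, Set.image_insert_eq, Set.insert_union]
        rw [hins, hmaster, Set.univ_inter]
        have e2 : alphaOn G (insert a A) = alphaOn G Set.univ := hA2 a haA
        have u1 : alphaOn G (insert a A ∩ A₀) ≤ alphaOn G A₀ :=
          alphaOn_mono G Set.inter_subset_right
        omega
      · exact absurd (Or.inr ⟨b, rfl⟩) hw
  · rintro B ⟨hB1, hB2⟩ hBB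
    have hB1' : alphaOn H B + 1 = alphaOn H Set.univ := hB1
    have hBB' : alphaOn H (B ∩ B₀) + 2 = alphaOn H Set.univ := hBB
    constructor
    · rw [hrl, hmaster, Set.univ_inter]; omega
    · rintro (a | b) hw
      · exact absurd (Or.inl ⟨a, rfl⟩) hw
      · have hbB : b ∉ B := fun h => hw (Or.inr ⟨b, h, rfl⟩)
        have hins : insert (Sum.inr b) (Set.range (Sum.inl : α → α ⊕ β) ∪ Sum.inr '' B) =
            Sum.inl '' Set.univ ∪ Sum.inr '' (insert b B) := by
          rw [hrl, Set.image_insert_eq]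
          ext x; simp only [Set.mem_insert_iff, Set.mem_union]; tauto
        rw [hins, hmaster, Set.univ_inter]
        have e2 : alphaOn H (insert b B) = alphaOn H Set.univ := hB2 b hbB
        have u1 : alphaOn H (insert b B ∩ B₀) ≤ alphaOn H B₀ :=
          alphaOn_mono H Set.inter_subset_right
        omega
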